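/- arXiv:2110.06714 — 5 statements merged into one kernel-verified Lean document; each statement's English description precedes it below -/
import Mathlib

section
/- Let α : ℝ → ℝ be continuous and positive on (0,∞), let T > 0, and let x : [0,T] → ℝ be differentiable with x'(s) = −α(x(s)) for all s, x(s) > 0 for s ∈ [0,T), and x(T) = 0. Then the function y ↦ 1/α(y) is (Lebesgue) integrable on the interval (0, x(0)) and T = ∫_{(0,x(0))} 1/α(y) dy. -/
open MeasureTheory

/-- If the flow `x' = -α(x)` started from `x(0) > 0` stays positive on `[0,T)` and hits `0`
at time `T`, then `1/α` is Lebesgue integrable on `(0, x(0))` and the hitting time satisfies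
`T = ∫_{(0,x(0))} dy / α(y)`. -/
theorem hitting_time_eq_integral
    (α : ℝ → ℝ)
    (hαc : ContinuousOn α (Set.Ioi 0))
    (hαpos : ∀ y > (0 : ℝ), 0 < α y)
    (T : ℝ) (hT : 0 < T)
    (x : ℝ → ℝ)
    (hx : ∀ s ∈ Set.Icc (0 : ℝ) T, HasDerivAt x (-α (x s)) s)
    (hxpos : ∀ s ∈ Set.Ico (0 : ℝ) T, 0 < x s)
    (hxT : x T = 0) :
    IntegrableOn (fun y => 1 / α y) (Set.Ioo 0 (x 0)) volume ∧
      T = ∫ y in Set.Ioo 0 (x 0), 1 / α y := by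
  set f : ℝ → ℝ := fun y => 1 / α y with hf
  have hx0pos : 0 < x 0 := hxpos 0 ⟨le_refl 0, hT⟩
  -- continuity of `1/α` on `Ioi 0`
  have hfc : ContinuousOn f (Set.Ioi 0) :=
    continuousOn_const.div hαc fun y hy => (hαpos y hy).ne'
  -- continuity of x on Icc 0 T
  have hxc : ContinuousOn x (Set.Icc 0 T) := fun s hs =>
    (hx s hs).continuousAt.continuousWithinAt
  -- x is strictly decreasing
  have hanti : StrictAntiOn x (Set.Icc 0 T) := by
    apply strictAntiOn_of_deriv_neg (convex_Icc 0 T) hxc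
    intro s hs
    rw [interior_Icc] at hs
    rw [(hx s ⟨hs.1.le, hs.2.le⟩).deriv]
    have := hαpos (x s) (hxpos s ⟨hs.1.le, hs.2⟩)
    linarith
  -- key identity : for s ∈ [0,T), ∫ y in (x s)..(x 0), f = s
  have key : ∀ s ∈ Set.Ico (0 : ℝ) T, (∫ y in (x s)..(x 0), f y) = s := by
    intro s hs
    have hderiv : ∀ t ∈ Set.uIcc (0 : ℝ) s,
        HasDerivAt (fun t => ∫ y in (x 0)..(x t), f y) (-1) t := by
      intro t ht
      rw [Set.uIcc_of_le hs.1] at ht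
      have htIco : t ∈ Set.Ico (0 : ℝ) T := ⟨ht.1, lt_of_le_of_lt ht.2 hs.2⟩
      have hxtpos : 0 < x t := hxpos t htIco
      have hsub : Set.uIcc (x 0) (x t) ⊆ Set.Ioi 0 := fun y hy =>
        lt_of_lt_of_le (lt_min hx0pos hxtpos) hy.1
      have hint : IntervalIntegrable f volume (x 0) (x t) :=
        (hfc.mono hsub).intervalIntegrable
      have hcontat : ContinuousAt f (x t) :=
        hfc.continuousAt (Ioi_mem_nhds hxtpos)
      have hF : HasDerivAt (fun u => ∫ y in (x 0)..u, f y) (f (x t)) (x t) :=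
        intervalIntegral.integral_hasDerivAt_right hint
          (hfc.stronglyMeasurableAtFilter isOpen_Ioi _ hxtpos) hcontat
      have := hF.comp t (hx t ⟨htIco.1, htIco.2.le⟩)
      have hαne : α (x t) ≠ 0 := (hαpos (x t) hxtpos).ne'
      have e : f (x t) * -α (x t) = -1 := by
        simp only [hf]
        rw [mul_neg, one_div, inv_mul_cancel₀ hαne]
      rw [e] at this
      exact this
    have hci : IntervalIntegrable (fun _ : ℝ => (-1 : ℝ)) volume 0 s :=
      intervalIntegrable_const
    have h1 := intervalIntegral.integral_eq_sub_of_hasDerivAt hderiv hci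
    simp only [intervalIntegral.integral_const, smul_eq_mul, mul_neg_one,
      intervalIntegral.integral_same] at h1
    have h2 : (∫ y in (x s)..(x 0), f y) = -∫ y in (x 0)..(x s), f y :=
      intervalIntegral.integral_symm _ _
    rw [h2]; linarith
  -- the approximating sequence
  set s : ℕ → ℝ := fun n => T - T / (n + 2) with hsdef
  have hs_mem : ∀ n, s n ∈ Set.Ico (0 : ℝ) T := by
    intro n
    constructor
    · have h1 : T / ((n : ℝ) + 2) ≤ T := by
        apply div_le_self hT.le; linarith [Nat.cast_nonneg (α := ℝ) n]
      simp only [hsdef]; linarith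
    · have h1 : 0 < T / ((n : ℝ) + 2) := by positivity
      simp only [hsdef]; linarith
  have hs_pos : ∀ n, 0 < s n := by
    intro n
    have h1 : T / ((n : ℝ) + 2) ≤ T / 2 := by
      apply div_le_div_of_nonneg_left hT.le (by norm_num)
      linarith [Nat.cast_nonneg (α := ℝ) n]
    have : 0 < T / 2 := by positivity
    simp only [hsdef]; linarith
  have hs_tendsto : Filter.Tendsto s Filter.atTop (nhds T) := by
    have h1 : Filter.Tendsto (fun n : ℕ => ((n : ℝ) + 2)) Filter.atTop Filter.atTop :=
      Filter.tendsto_atTop_add_const_right _ 2 tendsto_natCast_atTop_atTop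
    have h2 : Filter.Tendsto (fun n : ℕ => T / ((n : ℝ) + 2)) Filter.atTop (nhds 0) := by
      simpa [div_eq_mul_inv] using (h1.inv_tendsto_atTop.const_mul T)
    simpa using Filter.Tendsto.sub (tendsto_const_nhds (x := T)) h2
  set a : ℕ → ℝ := fun n => x (s n) with hadef
  have ha_pos : ∀ n, 0 < a n := fun n => hxpos _ (hs_mem n)
  have ha_lt : ∀ n, a n < x 0 :=
    fun n => hanti ⟨le_refl 0, hT.le⟩ ⟨(hs_mem n).1, (hs_mem n).2.le⟩ (hs_pos n)
  have ha_tendsto : Filter.Tendsto a Filter.atTop (nhds 0) := by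
    have hcx : ContinuousAt x T := (hx T ⟨hT.le, le_refl T⟩).continuousAt
    have := (hcx.tendsto).comp hs_tendsto
    rwa [hxT] at this
  -- integrability on each Ioc (a n) (x 0)
  have hfi : ∀ n, IntegrableOn f (Set.Ioc (a n) (x 0)) volume := by
    intro n
    have hsub : Set.Icc (a n) (x 0) ⊆ Set.Ioi 0 := fun y hy =>
      lt_of_lt_of_le (ha_pos n) hy.1
    exact ((hfc.mono hsub).integrableOn_Icc).mono_set Set.Ioc_subset_Icc_self
  -- integral over Ioc (a n) (x 0) equals s n
  have hval : ∀ n, (∫ y in Set.Ioc (a n) (x 0), f y) = s n := by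
    intro n
    rw [← intervalIntegral.integral_of_le (ha_lt n).le]
    exact key (s n) (hs_mem n)
  have hnorm : ∀ n, (∫ y in Set.Ioc (a n) (x 0), ‖f y‖) = s n := by
    intro n
    rw [← hval n]
    apply setIntegral_congr_fun measurableSet_Ioc
    intro y hy
    have hy0 : 0 < y := lt_trans (ha_pos n) hy.1
    have : 0 ≤ f y := by
      have := hαpos y hy0
      positivity
    simp [Real.norm_eq_abs, abs_of_nonneg this]
  -- integrability on Ioc 0 (x 0)
  have hint : IntegrableOn f (Set.Ioc (0 : ℝ) (x 0)) volume := by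
    apply integrableOn_Ioc_of_intervalIntegral_norm_bounded_left
      (I := T) (a := a) (b := x 0) hfi ha_tendsto
    filter_upwards with n
    rw [hnorm n]
    exact (hs_mem n).2.le
  have hintIoo : IntegrableOn f (Set.Ioo (0 : ℝ) (x 0)) volume :=
    hint.mono_set Set.Ioo_subset_Ioc_self
  refine ⟨hintIoo, ?_⟩
  -- union of Ioc (a n) (x 0) is Ioc 0 (x 0)
  have ha_anti : Antitone a := by
    intro n m hnm
    have hsm : s n ≤ s m := by
      have hc : ((n : ℝ)) ≤ (m : ℝ) := Nat.cast_le.mpr hnm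
      have : T / ((m : ℝ) + 2) ≤ T / ((n : ℝ) + 2) := by
        apply div_le_div_of_nonneg_left hT.le (by positivity)
        linarith
      simp only [hsdef]; linarith
    rcases eq_or_lt_of_le hsm with h | h
    · simp [hadef, h]
    · exact (hanti ⟨(hs_mem n).1, (hs_mem n).2.le⟩ ⟨(hs_mem m).1, (hs_mem m).2.le⟩ h).le
  have hunion : (⋃ n, Set.Ioc (a n) (x 0)) = Set.Ioc 0 (x 0) := by
    ext y
    simp only [Set.mem_iUnion, Set.mem_Ioc]
    constructor
    · rintro ⟨n, h1, h2⟩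
      exact ⟨lt_trans (ha_pos n) h1, h2⟩
    · rintro ⟨h1, h2⟩
      obtain ⟨n, hn⟩ := (ha_tendsto.eventually_lt_const h1).exists
      exact ⟨n, hn, h2⟩
  have hmono : Monotone fun n => Set.Ioc (a n) (x 0) := fun n m hnm =>
    Set.Ioc_subset_Ioc_left (ha_anti hnm)
  have htend := tendsto_setIntegral_of_monotone (fun n => measurableSet_Ioc) hmono
    (by rw [hunion]; exact hint)
  rw [hunion] at htend
  have htend2 : Filter.Tendsto (fun n => ∫ y in Set.Ioc (a n) (x 0), f y)
      Filter.atTop (nhds T) := by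
    simp only [hval]; exact hs_tendsto
  have hTeq : T = ∫ y in Set.Ioc (0 : ℝ) (x 0), f y :=
    tendsto_nhds_unique htend2 htend
  rw [hTeq, integral_Ioc_eq_integral_Ioo]
end

section
/- Let α, β : ℝ → ℝ be continuous and positive on (0,∞), let T ∈ (0,∞], and let x : [0,T) → (0,∞) be differentiable with x'(s) = −α(x(s)) for all s ∈ [0,T) and x(s) → 0 as s → T. If ∫_{(0,x(0))} β(y)/α(y) dy = ∞, then ∫_{[0,T)} β(x(s)) ds = ∞. -/
open MeasureTheory

/-- Assumption `Γ(0) = -∞`: if `∫_{(0,x(0))} β/α dy = ∞` and `x` solves `x' = -α(x)` on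
`[0,T)` (with `T ∈ (0,∞]`) staying positive and tending to `0` at `T`, then the integrated
jump rate `∫_{[0,T)} β(x(s)) ds` is infinite. -/
theorem integrated_rate_infinite_of_Gamma_zero_eq_neg_infty
    (α β : ℝ → ℝ)
    (hαc : ContinuousOn α (Set.Ioi 0)) (hβc : ContinuousOn β (Set.Ioi 0))
    (hαpos : ∀ y > (0 : ℝ), 0 < α y) (hβpos : ∀ y > (0 : ℝ), 0 < β y)
    (T : EReal) (hT : 0 < T)
    (x : ℝ → ℝ)
    (hx : ∀ s : ℝ, 0 ≤ s → (s : EReal) < T → 0 < x s ∧ HasDerivAt x (-α (x s)) s)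
    (hlim : Filter.Tendsto x
      (Filter.comap (fun s : ℝ => (s : EReal)) (nhdsWithin T (Set.Iio T))) (nhds 0))
    (hdiv : ∫⁻ y in Set.Ioo 0 (x 0), ENNReal.ofReal (β y / α y) = ⊤) :
    ∫⁻ s in {s : ℝ | 0 ≤ s ∧ (s : EReal) < T}, ENNReal.ofReal (β (x s)) = ⊤ := by
  set S : Set ℝ := {s : ℝ | 0 ≤ s ∧ (s : EReal) < T} with hS
  -- membership
  have hmem : ∀ s ∈ S, 0 < x s ∧ HasDerivAt x (-α (x s)) s := fun s hs => hx s hs.1 hs.2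
  -- measurability of S
  have hSmeas : MeasurableSet S := by
    have : S = ((fun s : ℝ => (s : EReal)) ⁻¹' Set.Iio T) ∩ Set.Ici 0 := by
      ext s; simp [hS, Set.mem_setOf_eq, and_comm]
    rw [this]
    exact ((continuous_coe_real_ereal.measurable) measurableSet_Iio).inter measurableSet_Ici
  -- convexity of S
  have hSconv : Convex ℝ S := by
    apply Set.OrdConnected.convex
    constructor
    intro a ha b hb t ht
    exact ⟨le_trans ha.1 ht.1, lt_of_le_of_lt (EReal.coe_le_coe_iff.2 ht.2) hb.2⟩
  -- continuity of x on S
  have hxcont : ContinuousOn x S := fun s hs =>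
    ((hmem s hs).2.continuousAt).continuousWithinAt
  -- x is strictly antitone on S
  have hanti : StrictAntiOn x S := by
    apply strictAntiOn_of_deriv_neg hSconv hxcont
    intro t ht
    have ht' : t ∈ S := interior_subset ht
    rw [(hmem t ht').2.deriv]
    simpa using hαpos _ (hmem t ht').1
  have hinj : Set.InjOn x S := hanti.injOn
  -- the comap filter is nontrivial
  have hne : (Filter.comap (fun s : ℝ => (s : EReal)) (nhdsWithin T (Set.Iio T))).NeBot := by
    rw [Filter.comap_neBot_iff]
    intro U hU
    obtain ⟨a, haT, haU⟩ := (nhdsLT_basis_of_exists_lt ⟨0, hT⟩).mem_iff.1 hU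
    have ha'T : max a 0 < T := max_lt haT hT
    obtain ⟨z, hz1, hz2⟩ := exists_between ha'T
    have hz0 : (0 : EReal) < z := lt_of_le_of_lt (le_max_right a 0) hz1
    lift z to ℝ using ⟨(hz2.trans_le le_top).ne, (lt_of_le_of_lt bot_le hz0).ne'⟩
    exact ⟨z, haU ⟨lt_of_le_of_lt (le_max_left a 0) hz1, hz2⟩⟩
  -- every y ∈ (0, x 0) is attained by x on S
  have h0S : (0 : ℝ) ∈ S := ⟨le_refl 0, by exact_mod_cast hT⟩
  have hsub : Set.Ioo 0 (x 0) ⊆ x '' S := by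
    intro y hy
    -- find s₀ ∈ S with x s₀ < y
    have hev1 : x ⁻¹' Set.Iio y ∈ Filter.comap (fun s : ℝ => (s : EReal)) (nhdsWithin T (Set.Iio T)) :=
      hlim (Iio_mem_nhds hy.1)
    have hev2 : (fun s : ℝ => (s : EReal)) ⁻¹' (Set.Ioi 0 ∩ Set.Iio T) ∈
        Filter.comap (fun s : ℝ => (s : EReal)) (nhdsWithin T (Set.Iio T)) :=
      Filter.preimage_mem_comap (Filter.inter_mem
        (mem_nhdsWithin_of_mem_nhds (isOpen_Ioi.mem_nhds hT)) self_mem_nhdsWithin)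
    obtain ⟨s₀, hxs₀, hs₀pos, hs₀T⟩ := Filter.nonempty_of_mem (Filter.inter_mem hev1 hev2)
    have hs₀0 : (0 : ℝ) ≤ s₀ := (EReal.coe_pos.1 hs₀pos).le
    have hIccS : Set.Icc (0 : ℝ) s₀ ⊆ S := fun t ht =>
      ⟨ht.1, lt_of_le_of_lt (EReal.coe_le_coe_iff.2 ht.2) hs₀T⟩
    have hcont : ContinuousOn x (Set.Icc 0 s₀) := hxcont.mono hIccS
    have himage := intermediate_value_Icc' hs₀0 hcont
    have : y ∈ Set.Icc (x s₀) (x 0) := ⟨hxs₀.le, hy.2.le⟩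
    obtain ⟨t, ht, hxt⟩ := himage this
    exact ⟨t, hIccS ht, hxt⟩
  -- change of variables
  have key := MeasureTheory.lintegral_image_eq_lintegral_abs_det_fderiv_mul
    (μ := volume) hSmeas
    (f' := fun s => ContinuousLinearMap.smulRight (1 : ℝ →L[ℝ] ℝ) (-α (x s)))
    (fun s hs => ((hmem s hs).2.hasDerivWithinAt.hasFDerivWithinAt)) hinj
    (fun y => ENNReal.ofReal (β y / α y))
  simp only [ContinuousLinearMap.smulRight_one_eq_toSpanSingleton, ContinuousLinearMap.det_toSpanSingleton] at key
  have hLHS : (⊤ : ENNReal) ≤ ∫⁻ y in x '' S, ENNReal.ofReal (β y / α y) := by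
    rw [← hdiv]
    exact lintegral_mono_set hsub
  have hRHS : ∫⁻ s in S, ENNReal.ofReal |(-α (x s))| * ENNReal.ofReal (β (x s) / α (x s)) = ⊤ :=
    by rw [← key]; exact top_unique hLHS
  rw [show (∫⁻ s in S, ENNReal.ofReal (β (x s))) =
      ∫⁻ s in S, ENNReal.ofReal |(-α (x s))| * ENNReal.ofReal (β (x s) / α (x s)) from ?_, hRHS]
  apply setLIntegral_congr_fun hSmeas
  intro s hs
  have hα := hαpos _ (hmem s hs).1
  beta_reduce
  rw [abs_neg, abs_of_pos hα, ← ENNReal.ofReal_mul hα.le, mul_comm,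
    div_mul_cancel₀ _ hα.ne']
end

section
/- Let α, β : ℝ → ℝ be continuous and positive on (0,∞), and let x : [0,∞) → (0,∞) be differentiable with x'(s) = −α(x(s)) for all s ≥ 0 and x(s) → 0 as s → ∞. If ∫_{(0,x(0))} β(y)/α(y) dy < ∞, then β∘x is integrable on [0,∞) and ∫_0^∞ β(x(s)) ds = ∫_{(0,x(0))} β(y)/α(y) dy < ∞. -/
open MeasureTheory

/-- Auxiliary: lintegral over a monotone union of subsets equals the sup. -/
lemma lintegral_iSup_restrict_aux {f : ℝ → ENNReal} {S : Set ℝ} (hS : MeasurableSet S)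
    {T : ℕ → Set ℝ} (hT : ∀ n, MeasurableSet (T n)) (hTS : ∀ n, T n ⊆ S)
    (hmono : Monotone T) (hcover : ∀ s ∈ S, ∃ n, s ∈ T n)
    (hf : AEMeasurable f (volume.restrict S)) :
    ∫⁻ s in S, f s = ⨆ n, ∫⁻ s in T n, f s := by
  have h1 : ∀ n, ∫⁻ s in T n, f s ∂volume = ∫⁻ s, (T n).indicator f s ∂(volume.restrict S) := by
    intro n
    rw [lintegral_indicator (hT n), Measure.restrict_restrict (hT n),
      Set.inter_eq_left.mpr (hTS n)]
  calc ∫⁻ s in S, f s = ∫⁻ s, ⨆ n, (T n).indicator f s ∂(volume.restrict S) := by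
        refine lintegral_congr_ae ?_
        filter_upwards [ae_restrict_mem hS] with s hs
        obtain ⟨n, hn⟩ := hcover s hs
        apply le_antisymm
        · rw [← Set.indicator_of_mem hn f]
          exact le_iSup (fun n => (T n).indicator f s) n
        · exact iSup_le fun m => Set.indicator_le_self _ _ s
    _ = ⨆ n, ∫⁻ s, (T n).indicator f s ∂(volume.restrict S) :=
        lintegral_iSup' (fun n => hf.indicator (hT n))
          (Filter.Eventually.of_forall fun s m n hmn =>
            Set.indicator_le_indicator_of_subset (hmono hmn) (fun _ => zero_le) s)
    _ = ⨆ n, ∫⁻ s in T n, f s := iSup_congr fun n => (h1 n).symm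

/-- If Assumption `Γ(0) = -∞` fails, i.e. `∫_{(0,x(0))} β/α dy < ∞`, and the flow
`x' = -α(x)` stays positive on `[0,∞)` and tends to `0` at infinity, then `β ∘ x` is
integrable on `[0,∞)` and `∫_0^∞ β(x(s)) ds = ∫_{(0,x(0))} β(y)/α(y) dy`. -/
theorem integrated_rate_finite_of_Gamma_zero_finite
    (α β : ℝ → ℝ)
    (hαc : ContinuousOn α (Set.Ioi 0)) (hβc : ContinuousOn β (Set.Ioi 0))
    (hαpos : ∀ y > (0 : ℝ), 0 < α y) (hβpos : ∀ y > (0 : ℝ), 0 < β y)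
    (x : ℝ → ℝ)
    (hx : ∀ s : ℝ, 0 ≤ s → 0 < x s ∧ HasDerivAt x (-α (x s)) s)
    (hlim : Filter.Tendsto x Filter.atTop (nhds 0))
    (hfin : ∫⁻ y in Set.Ioo 0 (x 0), ENNReal.ofReal (β y / α y) < ⊤) :
    IntegrableOn (fun s => β (x s)) (Set.Ici 0) volume ∧
      ∫ s in Set.Ici (0 : ℝ), β (x s) = ∫ y in Set.Ioo 0 (x 0), β y / α y := by
  have hx0 : ∀ s : ℝ, 0 ≤ s → 0 < x s := fun s hs => (hx s hs).1
  have hxc : ContinuousOn x (Set.Ici 0) := fun s hs =>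
    ((hx s hs).2.continuousAt).continuousWithinAt
  have hanti : AntitoneOn x (Set.Ici 0) := by
    refine (strictAntiOn_of_deriv_neg (convex_Ici (0:ℝ)) hxc ?_).antitoneOn
    intro s hs
    rw [interior_Ici] at hs
    rw [(hx s hs.le).2.deriv]
    exact neg_lt_zero.mpr (hαpos _ (hx0 s hs.le))
  have hgc : ContinuousOn (fun y => β y / α y) (Set.Ioi 0) :=
    hβc.div hαc fun y hy => (hαpos y hy).ne'
  have hβxc : ContinuousOn (fun s => β (x s)) (Set.Ici 0) :=
    hβc.comp hxc fun s hs => hx0 s hs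
  -- change of variables on finite intervals
  have key : ∀ b : ℝ, 0 ≤ b →
      ∫ s in (0:ℝ)..b, β (x s) = ∫ y in Set.Ioo (x b) (x 0), β y / α y := by
    intro b hb
    have huIcc : Set.uIcc (0:ℝ) b = Set.Icc 0 b := Set.uIcc_of_le hb
    have hmaps : ∀ s ∈ Set.Icc (0:ℝ) b, x s ∈ Set.Ioi (0:ℝ) := fun s hs => hx0 s hs.1
    have h1 : ∀ s ∈ Set.uIcc (0:ℝ) b, HasDerivAt x (-α (x s)) s := by
      intro s hs; rw [huIcc] at hs; exact (hx s hs.1).2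
    have h2 : ContinuousOn (fun s => -α (x s)) (Set.uIcc (0:ℝ) b) := by
      rw [huIcc]
      exact (hαc.comp (hxc.mono Set.Icc_subset_Ici_self) hmaps).neg
    have h3 : ContinuousOn (fun y => β y / α y) (x '' Set.uIcc (0:ℝ) b) := by
      rw [huIcc]
      exact hgc.mono (by rintro _ ⟨s, hs, rfl⟩; exact hmaps s hs)
    have hsub := intervalIntegral.integral_comp_smul_deriv' h1 h2 h3
    have hlhs : ∫ s in (0:ℝ)..b, (-α (x s)) • ((fun y => β y / α y) ∘ x) s
        = ∫ s in (0:ℝ)..b, -(β (x s)) := by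
      refine intervalIntegral.integral_congr fun s hs => ?_
      rw [huIcc] at hs
      have hα := hαpos _ (hx0 s hs.1)
      simp only [Function.comp, smul_eq_mul]
      field_simp
    rw [hlhs, intervalIntegral.integral_neg] at hsub
    have hxb : x b ≤ x 0 := hanti Set.self_mem_Ici hb hb
    rw [← neg_eq_iff_eq_neg.mpr hsub.symm]
    rw [← intervalIntegral.integral_symm, intervalIntegral.integral_of_le hxb,
      integral_Ioc_eq_integral_Ioo]
  -- nonneg on Ioi 0
  have hgnn : ∀ y : ℝ, 0 < y → 0 ≤ β y / α y := fun y hy =>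
    (div_pos (hβpos y hy) (hαpos y hy)).le
  -- integrability on finite pieces
  have hintx : ∀ n : ℕ, IntegrableOn (fun s => β (x s)) (Set.Ioc 0 (n:ℝ)) := fun n =>
    ((hβxc.mono (Set.Icc_subset_Ici_self)).integrableOn_Icc).mono_set Set.Ioc_subset_Icc_self
  have hintg : ∀ n : ℕ, IntegrableOn (fun y => β y / α y) (Set.Ioo (x n) (x 0)) := by
    intro n
    have hpos : (0:ℝ) < x n := hx0 _ (Nat.cast_nonneg n)
    have : Set.Icc (x n) (x 0) ⊆ Set.Ioi 0 := fun y hy => lt_of_lt_of_le hpos hy.1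
    exact ((hgc.mono this).integrableOn_Icc).mono_set Set.Ioo_subset_Icc_self
  -- A n = B n  (as lintegrals)
  have hAB : ∀ n : ℕ, ∫⁻ s in Set.Icc (0:ℝ) n, ENNReal.ofReal (β (x s))
      = ∫⁻ y in Set.Ioo (x n) (x 0), ENNReal.ofReal (β y / α y) := by
    intro n
    have hIccIoc : ∫⁻ s in Set.Icc (0:ℝ) n, ENNReal.ofReal (β (x s))
        = ∫⁻ s in Set.Ioc (0:ℝ) n, ENNReal.ofReal (β (x s)) := by
      rw [Measure.restrict_congr_set Ioc_ae_eq_Icc]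
    have hnn1 : 0 ≤ᵐ[volume.restrict (Set.Ioc (0:ℝ) n)] fun s => β (x s) := by
      filter_upwards [ae_restrict_mem measurableSet_Ioc] with s hs
      exact (hβpos _ (hx0 s hs.1.le)).le
    have hnn2 : 0 ≤ᵐ[volume.restrict (Set.Ioo (x n) (x 0))] fun y => β y / α y := by
      filter_upwards [ae_restrict_mem measurableSet_Ioo] with y hy
      exact hgnn y (lt_trans (hx0 _ (Nat.cast_nonneg n)) hy.1)
    rw [hIccIoc, ← ofReal_integral_eq_lintegral_ofReal (hintx n) hnn1,
      ← ofReal_integral_eq_lintegral_ofReal (hintg n) hnn2,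
      ← intervalIntegral.integral_of_le (Nat.cast_nonneg n), key n (Nat.cast_nonneg n)]
  -- main lintegral identity
  have hmain : ∫⁻ s in Set.Ici (0:ℝ), ENNReal.ofReal (β (x s))
      = ∫⁻ y in Set.Ioo 0 (x 0), ENNReal.ofReal (β y / α y) := by
    have hL : ∫⁻ s in Set.Ici (0:ℝ), ENNReal.ofReal (β (x s))
        = ⨆ n : ℕ, ∫⁻ s in Set.Icc (0:ℝ) n, ENNReal.ofReal (β (x s)) := by
      refine lintegral_iSup_restrict_aux measurableSet_Ici (fun n => measurableSet_Icc)
        (fun n => Set.Icc_subset_Ici_self) ?_ ?_ ?_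
      · exact fun m n hmn => Set.Icc_subset_Icc_right (Nat.cast_le.mpr hmn)
      · exact fun s hs => by
          obtain ⟨n, hn⟩ := exists_nat_ge s; exact ⟨n, hs, hn⟩
      · exact (ENNReal.measurable_ofReal.comp_aemeasurable
          (hβxc.aemeasurable measurableSet_Ici))
    have hR : ∫⁻ y in Set.Ioo 0 (x 0), ENNReal.ofReal (β y / α y)
        = ⨆ n : ℕ, ∫⁻ y in Set.Ioo (x n) (x 0), ENNReal.ofReal (β y / α y) := by
      refine lintegral_iSup_restrict_aux measurableSet_Ioo (fun n => measurableSet_Ioo)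
        (fun n => Set.Ioo_subset_Ioo_left (hx0 _ (Nat.cast_nonneg n)).le) ?_ ?_ ?_
      · intro m n hmn
        exact Set.Ioo_subset_Ioo_left
          (hanti (Set.mem_Ici.mpr (Nat.cast_nonneg m)) (Set.mem_Ici.mpr (Nat.cast_nonneg n)) (Nat.cast_le.mpr hmn))
      · intro y hy
        have : ∀ᶠ n : ℕ in Filter.atTop, x n < y :=
          (hlim.comp tendsto_natCast_atTop_atTop).eventually_lt_const hy.1
        obtain ⟨n, hn⟩ := this.exists
        exact ⟨n, hn, hy.2⟩
      · exact (ENNReal.measurable_ofReal.comp_aemeasurable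
          ((hgc.mono fun y hy => hy.1).aemeasurable measurableSet_Ioo))
    rw [hL, hR]
    exact iSup_congr hAB
  -- nonneg a.e. on Ici 0
  have hnnIci : 0 ≤ᵐ[volume.restrict (Set.Ici (0:ℝ))] fun s => β (x s) := by
    filter_upwards [ae_restrict_mem measurableSet_Ici] with s hs
    exact (hβpos _ (hx0 s hs)).le
  have hnnIoo : 0 ≤ᵐ[volume.restrict (Set.Ioo (0:ℝ) (x 0))] fun y => β y / α y := by
    filter_upwards [ae_restrict_mem measurableSet_Ioo] with y hy
    exact hgnn y hy.1
  have hmeasx : AEStronglyMeasurable (fun s => β (x s)) (volume.restrict (Set.Ici (0:ℝ))) :=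
    hβxc.aestronglyMeasurable measurableSet_Ici
  have hmeasg : AEStronglyMeasurable (fun y => β y / α y)
      (volume.restrict (Set.Ioo (0:ℝ) (x 0))) :=
    (hgc.mono fun y hy => hy.1).aestronglyMeasurable measurableSet_Ioo
  have hint : IntegrableOn (fun s => β (x s)) (Set.Ici 0) volume := by
    refine ⟨hmeasx, ?_⟩
    rw [hasFiniteIntegral_iff_ofReal hnnIci, hmain]
    exact hfin
  refine ⟨hint, ?_⟩
  rw [integral_eq_lintegral_of_nonneg_ae hnnIci hmeasx,
    integral_eq_lintegral_of_nonneg_ae hnnIoo hmeasg, hmain]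
end

section
/- Fix N ≥ 1. For 1 ≤ i ≤ N let α_i, β_i : [0,∞) → [0,∞) and g_i > 0 satisfy β_i(y) ≤ g_i α_i(y) for all y ≥ 0; let W_{i→j} ≥ 0 with W_{i→i} = 0; let F^i be probability measures on [0,∞) with finite first moment μ_i = ∫ y dF^i(y). Define the reproduction matrix H by H_{ij} = W_{j→i} g_i for i ≠ j and H_{ii} = g_i μ_i. Suppose κ_1, …, κ_N > 0 and ρ ≥ 0 satisfy Σ_j κ_j H_{ji} = ρ κ_i for all i, and set m_i = κ_i g_i. Then for every x ∈ [0,∞)^N: −Σ_i α_i(x_i) m_i + Σ_i β_i(x_i) ( m_i μ_i + Σ_{j≠i} W_{i→j} m_j ) − Σ_i β_i(x_i) x_i m_i ≤ −Σ_i κ_i ( g_i α_i(x_i) − ρ β_i(x_i) ). -/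
/-!
Since `(κ, ρ)` is a left eigenpair of `H` and `m_i = κ_i g_i`, the expected weight
`m_i μ_i + Σ_{j≠i} W_{i→j} m_j` that a spike of neuron `i` adds to `V` is exactly `(κᵀ H)_i = ρ κ_i`.
The generator then splits neuron by neuron into `-κ_i (g_i α_i - ρ β_i)` minus the weight
`β_i x_i m_i ≥ 0` removed by the reset.
-/

open MeasureTheory Finset
open scoped Matrix

section
variable {ι : Type*} [Fintype ι] [DecidableEq ι]

def reproductionMatrix (g μ : ι → ℝ) (W : ι → ι → ℝ) : Matrix ι ι ℝ :=
  Matrix.of fun i j => if i = j then g i * μ i else W j i * g i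

lemma vecMul_reproductionMatrix (κ g μ : ι → ℝ) (W : ι → ι → ℝ) (i : ι) :
    (κ ᵥ* reproductionMatrix g μ W) i
      = κ i * g i * μ i + ∑ j ∈ univ.erase i, W i j * (κ j * g j) := by
  rw [Matrix.vecMul, dotProduct, ← add_sum_erase _ _ (mem_univ i)]
  congr 1
  · simp [reproductionMatrix, mul_assoc]
  · refine sum_congr rfl fun j hj => ?_
    simp only [reproductionMatrix, Matrix.of_apply, if_neg (ne_of_mem_erase hj)]
    ring

end

theorem generator_lyapunov_bound_general
    (N : ℕ)
    (α β : Fin N → ℝ → ℝ)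
    (hβ : ∀ i, ∀ y : ℝ, 0 ≤ y → 0 ≤ β i y)
    (g : Fin N → ℝ) (hg : ∀ i, 0 < g i)
    (W : Fin N → Fin N → ℝ)
    (μ : Fin N → ℝ)
    (H : Fin N → Fin N → ℝ)
    (hH : ∀ i j, H i j = if i = j then g i * μ i else W j i * g i)
    (κ : Fin N → ℝ) (hκ : ∀ i, 0 < κ i)
    (ρ : ℝ)
    (heig : ∀ i, ∑ j, κ j * H j i = ρ * κ i)
    (m : Fin N → ℝ) (hm : ∀ i, m i = κ i * g i)
    (x : Fin N → ℝ) (hx : ∀ i, 0 ≤ x i) :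
    -∑ i, α i (x i) * m i
      + ∑ i, β i (x i) * (m i * μ i + ∑ j ∈ Finset.univ.erase i, W i j * m j)
      - ∑ i, β i (x i) * x i * m i
    ≤ -∑ i, κ i * (g i * α i (x i) - ρ * β i (x i)) := by
  have hH' : H = reproductionMatrix g μ W := Matrix.ext hH
  have hspike : ∀ i, m i * μ i + ∑ j ∈ univ.erase i, W i j * m j = ρ * κ i := fun i => by
    simp only [hm]
    rw [← heig i, hH', ← vecMul_reproductionMatrix]
    rfl
  simp only [hspike, ← sum_neg_distrib, ← sum_add_distrib, ← sum_sub_distrib]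
  refine sum_le_sum fun i _ => ?_
  have hm_nonneg : 0 ≤ m i := hm i ▸ (mul_pos (hκ i) (hg i)).le
  have hreset := mul_nonneg (mul_nonneg (hβ i (x i) (hx i)) (hx i)) hm_nonneg
  rw [hm i] at hreset ⊢
  linarith

/-- Foster–Lyapunov bound: with `m_i = κ_i g_i` where `(κ, ρ)` is a positive left
eigenvector–eigenvalue pair of the reproduction matrix `H` (`H_{ij} = W_{j→i} g_i` for
`i ≠ j`, `H_{ii} = g_i μ_i`), the generator applied to `V(x) = Σ m_i x_i` satisfies
`G^N V(x) ≤ -Σ_i κ_i (g_i α_i(x_i) - ρ β_i(x_i))` on `[0,∞)^N`. -/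
theorem generator_lyapunov_bound
    (N : ℕ) (hN : 1 ≤ N)
    (α β : Fin N → ℝ → ℝ)
    (hα : ∀ i, ∀ y : ℝ, 0 ≤ y → 0 ≤ α i y)
    (hβ : ∀ i, ∀ y : ℝ, 0 ≤ y → 0 ≤ β i y)
    (g : Fin N → ℝ) (hg : ∀ i, 0 < g i)
    (hβα : ∀ i, ∀ y : ℝ, 0 ≤ y → β i y ≤ g i * α i y)
    (W : Fin N → Fin N → ℝ) (hW : ∀ i j, 0 ≤ W i j) (hWdiag : ∀ i, W i i = 0)
    (F : Fin N → Measure ℝ)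
    (hFp : ∀ i, IsProbabilityMeasure (F i))
    (hFsupp : ∀ i, F i (Set.Iio 0) = 0)
    (hFmom : ∀ i, Integrable (fun y : ℝ => y) (F i))
    (μ : Fin N → ℝ) (hμ : ∀ i, μ i = ∫ y, y ∂(F i))
    (H : Fin N → Fin N → ℝ)
    (hH : ∀ i j, H i j = if i = j then g i * μ i else W j i * g i)
    (κ : Fin N → ℝ) (hκ : ∀ i, 0 < κ i)
    (ρ : ℝ) (hρ : 0 ≤ ρ)
    (heig : ∀ i, ∑ j, κ j * H j i = ρ * κ i)
    (m : Fin N → ℝ) (hm : ∀ i, m i = κ i * g i)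
    (x : Fin N → ℝ) (hx : ∀ i, 0 ≤ x i) :
    -∑ i, α i (x i) * m i
      + ∑ i, β i (x i) * (m i * μ i + ∑ j ∈ Finset.univ.erase i, W i j * m j)
      - ∑ i, β i (x i) * x i * m i
    ≤ -∑ i, κ i * (g i * α i (x i) - ρ * β i (x i)) :=
  generator_lyapunov_bound_general N α β hβ g hg W μ H hH κ hκ ρ heig m hm x hx
end

section
/- Under the hypotheses of the previous statement, if moreover ρ < 1, then for every x ∈ [0,∞)^N: −Σ_i α_i(x_i) m_i + Σ_i β_i(x_i) ( m_i μ_i + Σ_{j≠i} W_{i→j} m_j ) − Σ_i β_i(x_i) x_i m_i ≤ −(1−ρ) Σ_i κ_i g_i α_i(x_i) ≤ 0; in particular, if α_i(x_i) > 0 for some i, then the left-hand side is strictly negative. -/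
/-!
A spike of neuron `i` (rate `β_i(x_i)`) redraws `x_i` from `F^i` and adds `W_{i→j}` to each other
`x_j`, so it changes `V` on average by `m_i μ_i + Σ_{j≠i} W_{i→j} m_j - x_i m_i
= Σ_j κ_j H_{ji} - x_i m_i = ρ κ_i - x_i m_i`, as `κ` is a left eigenvector of `H`. With
`β_i ≤ g_i α_i` the spikes thus contribute at most `ρ Σ_i κ_i g_i α_i(x_i)`, while the drift term
is exactly `-Σ_i κ_i g_i α_i(x_i)`.
-/

open MeasureTheory Finset

theorem sum_mul_reproduction_eq {ι : Type*} [Fintype ι] [DecidableEq ι]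
    (g μ κ m : ι → ℝ) (W H : ι → ι → ℝ)
    (hH : ∀ i j, H i j = if i = j then g i * μ i else W j i * g i)
    (hm : ∀ i, m i = κ i * g i) (i : ι) :
    ∑ j, κ j * H j i = m i * μ i + ∑ j ∈ univ.erase i, W i j * m j := by
  rw [← sum_erase_add _ _ (mem_univ i), add_comm]
  congr 1
  · simp only [hH, hm, if_true]
    ring
  · refine sum_congr rfl fun j hj => ?_
    rw [hH, if_neg (ne_of_mem_erase hj), hm]
    ring

theorem lyapunov_drift_le {ι : Type*} [Fintype ι] (a b x g κ m : ι → ℝ) (ρ : ℝ)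
    (hb : ∀ i, 0 ≤ b i) (hba : ∀ i, b i ≤ g i * a i) (hx : ∀ i, 0 ≤ x i)
    (hg : ∀ i, 0 ≤ g i) (hκ : ∀ i, 0 ≤ κ i) (hρ : 0 ≤ ρ) (hm : ∀ i, m i = κ i * g i) :
    -∑ i, a i * m i + ∑ i, b i * (ρ * κ i) - ∑ i, b i * x i * m i
      ≤ -(1 - ρ) * ∑ i, κ i * (g i * a i) := by
  have hleak : ∑ i, a i * m i = ∑ i, κ i * (g i * a i) :=
    sum_congr rfl fun i _ => by rw [hm]; ring
  have hspikes : ∑ i, b i * (ρ * κ i) ≤ ρ * ∑ i, κ i * (g i * a i) := by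
    rw [mul_sum]
    refine sum_le_sum fun i _ => ?_
    calc b i * (ρ * κ i) ≤ g i * a i * (ρ * κ i) :=
          mul_le_mul_of_nonneg_right (hba i) (mul_nonneg hρ (hκ i))
      _ = ρ * (κ i * (g i * a i)) := by ring
  have hresets : 0 ≤ ∑ i, b i * x i * m i :=
    sum_nonneg fun i _ => mul_nonneg (mul_nonneg (hb i) (hx i)) (hm i ▸ mul_nonneg (hκ i) (hg i))
  linarith

theorem generator_strictly_negative_of_spectral_radius_lt_one_general
    (N : ℕ)
    (α β : Fin N → ℝ → ℝ)
    (hα : ∀ i, ∀ y : ℝ, 0 ≤ y → 0 ≤ α i y)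
    (hβ : ∀ i, ∀ y : ℝ, 0 ≤ y → 0 ≤ β i y)
    (g : Fin N → ℝ) (hg : ∀ i, 0 < g i)
    (hβα : ∀ i, ∀ y : ℝ, 0 ≤ y → β i y ≤ g i * α i y)
    (W : Fin N → Fin N → ℝ)
    (μ : Fin N → ℝ)
    (H : Fin N → Fin N → ℝ)
    (hH : ∀ i j, H i j = if i = j then g i * μ i else W j i * g i)
    (κ : Fin N → ℝ) (hκ : ∀ i, 0 < κ i)
    (ρ : ℝ) (hρ : 0 ≤ ρ) (hρ1 : ρ < 1)
    (heig : ∀ i, ∑ j, κ j * H j i = ρ * κ i)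
    (m : Fin N → ℝ) (hm : ∀ i, m i = κ i * g i)
    (x : Fin N → ℝ) (hx : ∀ i, 0 ≤ x i) :
    (-∑ i, α i (x i) * m i
        + ∑ i, β i (x i) * (m i * μ i + ∑ j ∈ Finset.univ.erase i, W i j * m j)
        - ∑ i, β i (x i) * x i * m i
      ≤ -(1 - ρ) * ∑ i, κ i * (g i * α i (x i)))
    ∧ (-(1 - ρ) * ∑ i, κ i * (g i * α i (x i)) ≤ 0)
    ∧ ((∃ i, 0 < α i (x i)) →
        -∑ i, α i (x i) * m i
          + ∑ i, β i (x i) * (m i * μ i + ∑ j ∈ Finset.univ.erase i, W i j * m j)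
          - ∑ i, β i (x i) * x i * m i < 0) := by
  have hoffspring (i : Fin N) : m i * μ i + ∑ j ∈ univ.erase i, W i j * m j = ρ * κ i := by
    rw [← heig i, sum_mul_reproduction_eq g μ κ m W H hH hm]
  have hterm (i : Fin N) : 0 ≤ κ i * (g i * α i (x i)) :=
    mul_nonneg (hκ i).le (mul_nonneg (hg i).le (hα i _ (hx i)))
  have hdrift := lyapunov_drift_le (fun i => α i (x i)) (fun i => β i (x i)) x g κ m ρ
    (fun i => hβ i _ (hx i)) (fun i => hβα i _ (hx i)) hx (fun i => (hg i).le)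
    (fun i => (hκ i).le) hρ hm
  have hbound : -(1 - ρ) * ∑ i, κ i * (g i * α i (x i)) ≤ 0 :=
    mul_nonpos_of_nonpos_of_nonneg (by linarith) (sum_nonneg fun i _ => hterm i)
  simp only [hoffspring]
  refine ⟨hdrift, hbound, fun ⟨i, hi⟩ => hdrift.trans_lt ?_⟩
  have hpos : 0 < ∑ i, κ i * (g i * α i (x i)) :=
    sum_pos' (fun j _ => hterm j) ⟨i, mem_univ i, mul_pos (hκ i) (mul_pos (hg i) hi)⟩
  exact mul_neg_of_neg_of_pos (by linarith) hpos

/-- Foster–Lyapunov criterion: under the hypotheses of the Lyapunov bound, if moreover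
`ρ < 1` then `G^N V(x) ≤ -(1-ρ) Σ_i κ_i g_i α_i(x_i) ≤ 0`, with strict negativity of
`G^N V(x)` as soon as `α_i(x_i) > 0` for some `i`. -/
theorem generator_strictly_negative_of_spectral_radius_lt_one
    (N : ℕ) (hN : 1 ≤ N)
    (α β : Fin N → ℝ → ℝ)
    (hα : ∀ i, ∀ y : ℝ, 0 ≤ y → 0 ≤ α i y)
    (hβ : ∀ i, ∀ y : ℝ, 0 ≤ y → 0 ≤ β i y)
    (g : Fin N → ℝ) (hg : ∀ i, 0 < g i)
    (hβα : ∀ i, ∀ y : ℝ, 0 ≤ y → β i y ≤ g i * α i y)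
    (W : Fin N → Fin N → ℝ) (hW : ∀ i j, 0 ≤ W i j) (hWdiag : ∀ i, W i i = 0)
    (F : Fin N → Measure ℝ)
    (hFp : ∀ i, IsProbabilityMeasure (F i))
    (hFsupp : ∀ i, F i (Set.Iio 0) = 0)
    (hFmom : ∀ i, Integrable (fun y : ℝ => y) (F i))
    (μ : Fin N → ℝ) (hμ : ∀ i, μ i = ∫ y, y ∂(F i))
    (H : Fin N → Fin N → ℝ)
    (hH : ∀ i j, H i j = if i = j then g i * μ i else W j i * g i)
    (κ : Fin N → ℝ) (hκ : ∀ i, 0 < κ i)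
    (ρ : ℝ) (hρ : 0 ≤ ρ) (hρ1 : ρ < 1)
    (heig : ∀ i, ∑ j, κ j * H j i = ρ * κ i)
    (m : Fin N → ℝ) (hm : ∀ i, m i = κ i * g i)
    (x : Fin N → ℝ) (hx : ∀ i, 0 ≤ x i) :
    (-∑ i, α i (x i) * m i
        + ∑ i, β i (x i) * (m i * μ i + ∑ j ∈ Finset.univ.erase i, W i j * m j)
        - ∑ i, β i (x i) * x i * m i
      ≤ -(1 - ρ) * ∑ i, κ i * (g i * α i (x i)))
    ∧ (-(1 - ρ) * ∑ i, κ i * (g i * α i (x i)) ≤ 0)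
    ∧ ((∃ i, 0 < α i (x i)) →
        -∑ i, α i (x i) * m i
          + ∑ i, β i (x i) * (m i * μ i + ∑ j ∈ Finset.univ.erase i, W i j * m j)
          - ∑ i, β i (x i) * x i * m i < 0) :=
  generator_strictly_negative_of_spectral_radius_lt_one_general N α β hα hβ g hg hβα W μ H hH κ hκ ρ
    hρ hρ1 heig m hm x hx
end
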